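/- arXiv:2408.15458 — 3 statements merged into one kernel-verified Lean document; each statement's English description precedes it below -/
import Mathlib

section
/- Let (X_i, Y_i), i = 1, ..., n+1, be an exchangeable sequence of random pairs taking values in a measurable space 𝒳 × {0,1}, and let 𝒳 = 𝒳_1 ∪ ... ∪ 𝒳_K be a finite measurable partition of the feature space. Let p̂ : 𝒳 → [0,1] be a fixed (non-random) measurable function, interpreted as p̂(Y=1|x), and define the conformity score s(x,y) = 1 − p̂(y|x), i.e. s(x,1) = 1 − p̂(x) and s(x,0) = p̂(x). Fix a miscoverage level α ∈ (0,1). For each j ∈ {1,...,K}, let k_j = |{i ∈ [n] : X_i ∈ 𝒳_j}| be the (random) number of calibration points falling in 𝒳_j, and let q_j be the ⌈(k_j+1)(1−α)⌉-th smallest value among the calibration scores {s(X_i, Y_i) : i ∈ [n], X_i ∈ 𝒳_j} (with q_j = +∞ whenever ⌈(k_j+1)(1−α)⌉ > k_j). Define the local prediction set C_locart(x) = {ℓ ∈ {0,1} : p̂(ℓ|x) ≥ 1 − q_j} for x ∈ 𝒳_j. Then for every j with P(X_{n+1} ∈ 𝒳_j) > 0, P( Y_{n+1} ∈ C_locart(X_{n+1})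 | X_{n+1} ∈ 𝒳_j ) ≥ 1 − α. -/
/-!
Push `μ` forward to the law `ν` of `(Z_1, …, Z_{n+1})`, `Z_i = (X_i, Y_i)`; exchangeability makes
`ν` invariant under permutations of the coordinates. A real `t` lies below the `k`-th order
statistic of a multiset iff fewer than `k` of its elements are `< t`, so the covering event for
the test point is a rank condition that makes sense for every index `i`: `Z_i` lies in the cell
and fewer than `⌈(k + 1)(1 - α)⌉` of the `k` other points in the cell have a smaller score.
Invariance makes the probability of this event, and of `Z_i` lying in the cell, independent of
`i`. Deterministically, if `N` points lie in the cell, at least `min(⌈N(1 - α)⌉, N) ≥ (1 - α)N`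
of them satisfy the rank condition (a point of minimal score among those that fail it would have
all points below it passing, hence fewer than `⌈N(1 - α)⌉` below it). Averaging over `i` gives
`(1 - α) P(X_{n+1} ∈ A) ≤ P(X_{n+1} ∈ A, Y_{n+1} covered)`.
-/

open MeasureTheory ProbabilityTheory
open scoped ENNReal Classical

/-- A finite sequence of random variables is exchangeable if its joint distribution is
invariant under every permutation of the indices. -/
def Exchangeable {Ω : Type*} [MeasurableSpace Ω] {E : Type*} [MeasurableSpace E]
    {m : ℕ} (μ : Measure Ω) (Z : Fin m → Ω → E) : Prop :=
  ∀ σ : Equiv.Perm (Fin m),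
    Measure.map (fun ω (i : Fin m) => Z (σ i) ω) μ =
      Measure.map (fun ω (i : Fin m) => Z i ω) μ

/-- Predicted probability of label `ℓ ∈ {0,1}` at `x`, given `phat x = p̂(Y=1|x)`:
`p̂(1|x) = phat x` and `p̂(0|x) = 1 - phat x`. -/
noncomputable def predProb {𝒳 : Type*} (phat : 𝒳 → ℝ) (ℓ : Fin 2) (x : 𝒳) : ℝ :=
  if ℓ = 1 then phat x else 1 - phat x

/-- Binary-classification conformity score `s(x,y) = 1 - p̂(y|x)`, i.e.
`s(x,1) = 1 - phat x` and `s(x,0) = phat x`. -/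
noncomputable def confScore {𝒳 : Type*} (phat : 𝒳 → ℝ) (x : 𝒳) (y : Fin 2) : ℝ :=
  if y = 1 then 1 - phat x else phat x

/-- The `k`-th smallest value (1-indexed, i.e. the `k`-th order statistic) of a finite
multiset of reals, as an extended real number, with the convention that it equals `+∞`
whenever `k` exceeds the cardinality of the multiset (note `k ≥ 1` always holds in
applications, so the condition `k - 1 < card` coincides with `k ≤ card`). -/
noncomputable def kthSmallestM (s : Multiset ℝ) (k : ℕ) : EReal :=
  if h : k - 1 < Multiset.card s then
    (((s.sort (· ≤ ·)).get ⟨k - 1, by simpa using h⟩ : ℝ) : EReal)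
  else ⊤

/-- The (random) set of calibration indices `i ∈ {1,…,n}` whose feature falls in `A`. -/
noncomputable def calibIndices {Ω 𝒳 : Type*} {n : ℕ}
    (X : Fin (n + 1) → Ω → 𝒳) (A : Set 𝒳) (ω : Ω) : Finset (Fin n) :=
  Finset.univ.filter (fun i : Fin n => X i.castSucc ω ∈ A)

/-- The Locart local conformal quantile for a partition element `A`: the
`⌈(k_A + 1)(1-α)⌉`-th smallest calibration score among calibration points falling in `A`
(where `k_A` is the number of such points), and `+∞` if `⌈(k_A + 1)(1-α)⌉ > k_A`. -/
noncomputable def locartQuantile {Ω 𝒳 : Type*} {n : ℕ}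
    (X : Fin (n + 1) → Ω → 𝒳) (Y : Fin (n + 1) → Ω → Fin 2)
    (phat : 𝒳 → ℝ) (A : Set 𝒳) (α : ℝ) (ω : Ω) : EReal :=
  kthSmallestM
    ((calibIndices X A ω).val.map fun i => confScore phat (X i.castSucc ω) (Y i.castSucc ω))
    ⌈(((calibIndices X A ω).card : ℝ) + 1) * (1 - α)⌉₊

open Finset

theorem List.Pairwise.le_getElem_iff_countP_le {α : Type*} [LinearOrder α] {L : List α}
    (hL : L.Pairwise (· ≤ ·)) (t : α) (p : ℕ) (hp : p < L.length) :
    t ≤ L[p] ↔ L.countP (· < t) ≤ p := by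
  induction L generalizing p with
  | nil => simp at hp
  | cons a l ih =>
    rw [List.pairwise_cons] at hL
    by_cases hat : a < t
    · rw [List.countP_cons_of_pos (by simpa using hat)]
      cases p with
      | zero => simpa using hat
      | succ q => simpa using ih hL.2 q (by simpa using hp)
    · have hta : t ≤ a := not_lt.mp hat
      have hcount : (a :: l).countP (· < t) = 0 :=
        List.countP_eq_zero.mpr fun b hb => by
          rcases List.mem_cons.mp hb with rfl | hb
          · simpa using hta
          · simpa using hta.trans (hL.1 b hb)
      rw [hcount]
      cases p with
      | zero => simpa using hta
      | succ q => simpa using hta.trans (hL.1 _ (List.getElem_mem _))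

theorem coe_le_kthSmallestM_iff (M : Multiset ℝ) {k : ℕ} (hk : 1 ≤ k) (t : ℝ) :
    (t : EReal) ≤ kthSmallestM M k ↔ M.countP (· < t) < k := by
  unfold kthSmallestM
  split_ifs with h
  · rw [List.get_eq_getElem, EReal.coe_le_coe_iff,
      (M.pairwise_sort _).le_getElem_iff_countP_le t (k - 1) (by simpa using h),
      ← Multiset.coe_countP, M.sort_eq]
    omega
  · simpa using (M.countP_le_card _).trans_lt (by omega)

theorem EReal.sub_le_coe_sub_iff (a b : ℝ) (q : EReal) :
    (a : EReal) - q ≤ ((a - b : ℝ) : EReal) ↔ (b : EReal) ≤ q := by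
  induction q using EReal.rec with
  | bot => simpa using EReal.coe_ne_top (a - b)
  | coe r => norm_cast; constructor <;> intro <;> linarith
  | top => simp

theorem Finset.min_le_card_filter_card_filter_lt {ι β : Type*} [LinearOrder β]
    (S : Finset ι) (t : ι → β) (k : ℕ) :
    min k #S ≤ #{i ∈ S | #{r ∈ S | t r < t i} < k} := by
  set T := {i ∈ S | #{r ∈ S | t r < t i} < k}
  by_contra! hT
  have hne : (S \ T).Nonempty := by
    rw [Finset.sdiff_nonempty]
    intro hST
    have := Finset.card_le_card hST
    omega
  obtain ⟨i, hi, hmin⟩ := Finset.exists_min_image (S \ T) t hne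
  obtain ⟨hiS, hiT⟩ := Finset.mem_sdiff.mp hi
  have hbelow : {r ∈ S | t r < t i} ⊆ T := fun r hr => by
    rw [Finset.mem_filter] at hr
    by_contra hrT
    exact (hmin r (Finset.mem_sdiff.mpr ⟨hr.1, hrT⟩)).not_gt hr.2
  exact hiT (Finset.mem_filter.mpr
    ⟨hiS, (Finset.card_le_card hbelow).trans_lt (hT.trans_le (min_le_left _ _))⟩)

theorem Fin.card_filter_univ_castSucc {n : ℕ} (p : Fin (n + 1) → Prop) [DecidablePred p] :
    #{i : Fin n | p i.castSucc} = #{r : Fin (n + 1) | r ≠ Fin.last n ∧ p r} := by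
  have hmap : ({r : Fin (n + 1) | r ≠ Fin.last n ∧ p r} : Finset _) =
      ({i : Fin n | p i.castSucc} : Finset _).map Fin.castSuccEmb := by
    ext r
    induction r using Fin.lastCases <;> simp [Fin.castSucc_ne_last]
  rw [hmap, Finset.card_map]

theorem Exchangeable.map_comp_perm {Ω E : Type*} [MeasurableSpace Ω] [MeasurableSpace E]
    {m : ℕ} {μ : Measure Ω} {Z : Fin m → Ω → E} (hZ : Exchangeable μ Z)
    (hZm : ∀ i, Measurable (Z i)) (σ : Equiv.Perm (Fin m)) :
    (μ.map fun ω i => Z i ω).map (· ∘ σ) = μ.map fun ω i => Z i ω := by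
  rw [Measure.map_map (by fun_prop) (measurable_pi_lambda _ hZm)]
  exact hZ σ

section PermInvariant

variable {E : Type*} [MeasurableSpace E] {m : ℕ} {ν : Measure (Fin m → E)}
  {F : Fin m → Set (Fin m → E)}

theorem measure_eq_of_preimage_comp_perm (hν : ∀ σ : Equiv.Perm (Fin m), ν.map (· ∘ σ) = ν)
    (hF : ∀ (σ : Equiv.Perm (Fin m)) i, (· ∘ σ) ⁻¹' F i = F (σ i))
    (hFm : ∀ i, MeasurableSet (F i)) (i i' : Fin m) :
    ν (F i) = ν (F i') := by
  have hσ : Equiv.swap i' i i' = i := Equiv.swap_apply_left i' i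
  rw [← hσ, ← hF, ← Measure.map_apply (by fun_prop) (hFm i'), hν]

theorem sum_measure_eq_lintegral_card (hFm : ∀ i, MeasurableSet (F i)) :
    ∑ i, ν (F i) = ∫⁻ w, (#{i | w ∈ F i} : ℝ≥0∞) ∂ν := by
  calc ∑ i, ν (F i) = ∑ i, ∫⁻ w, (F i).indicator 1 w ∂ν := by
        simp only [lintegral_indicator_one (hFm _)]
    _ = ∫⁻ w, ∑ i, (F i).indicator 1 w ∂ν :=
        (lintegral_finsetSum _ fun i _ => measurable_one.indicator (hFm i)).symm
    _ = ∫⁻ w, (#{i | w ∈ F i} : ℝ≥0∞) ∂ν := by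
        simp [Set.indicator_apply]

theorem mul_measure_le_of_forall_mul_card_le
    (hν : ∀ σ : Equiv.Perm (Fin m), ν.map (· ∘ σ) = ν) {B G : Fin m → Set (Fin m → E)}
    (hB : ∀ (σ : Equiv.Perm (Fin m)) i, (· ∘ σ) ⁻¹' B i = B (σ i))
    (hG : ∀ (σ : Equiv.Perm (Fin m)) i, (· ∘ σ) ⁻¹' G i = G (σ i))
    (hBm : ∀ i, MeasurableSet (B i)) (hGm : ∀ i, MeasurableSet (G i)) {c : ℝ≥0∞}
    (hc : ∀ w, c * #{i | w ∈ B i} ≤ #{i | w ∈ G i}) (i : Fin m) :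
    c * ν (B i) ≤ ν (G i) := by
  have hsum : ∀ {F : Fin m → Set (Fin m → E)},
      (∀ (σ : Equiv.Perm (Fin m)) i, (· ∘ σ) ⁻¹' F i = F (σ i)) →
      (∀ i, MeasurableSet (F i)) → ∑ r, ν (F r) = m * ν (F i) := fun hF hFm => by
    simp [measure_eq_of_preimage_comp_perm hν hF hFm _ i]
  have hm : (m : ℝ≥0∞) ≠ 0 := by simpa using i.pos.ne'
  rw [← ENNReal.mul_le_mul_iff_right hm (ENNReal.natCast_ne_top m), mul_left_comm,
    ← hsum hB hBm, ← hsum hG hGm, sum_measure_eq_lintegral_card hBm,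
    sum_measure_eq_lintegral_card hGm]
  exact (lintegral_const_mul_le _ _).trans (lintegral_mono hc)

end PermInvariant

section LocalCoverageEvent

variable {E : Type*} {m : ℕ}

noncomputable def othersCount (p : E → E → Prop) (i : Fin m) (w : Fin m → E) : ℕ :=
  #{r | r ≠ i ∧ p (w i) (w r)}

theorem othersCount_comp_perm (p : E → E → Prop) (σ : Equiv.Perm (Fin m)) (i : Fin m)
    (w : Fin m → E) : othersCount p i (w ∘ σ) = othersCount p (σ i) w :=
  Finset.card_equiv σ fun r => by simp [σ.injective.eq_iff]

theorem measurable_othersCount [MeasurableSpace E] {p : E → E → Prop}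
    (hp : MeasurableSet {q : E × E | p q.1 q.2}) (i : Fin m) :
    Measurable (othersCount p i) := by
  unfold othersCount
  simp_rw [Finset.card_filter]
  refine Finset.measurable_sum _ fun r _ => Measurable.ite ?_ measurable_const measurable_const
  exact (MeasurableSet.const (r ≠ i)).inter
    ((by fun_prop : Measurable fun w : Fin m → E => (w i, w r)) hp)

/-- The event that the `i`-th point lies in `A` and its score is at most the
`⌈(k + 1)(1 - α)⌉`-th smallest score of the `k` other points lying in `A`. -/
def localCoverageEvent (A : Set E) (s : E → ℝ) (α : ℝ) (i : Fin m) : Set (Fin m → E) :=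
  {w | w i ∈ A ∧ othersCount (fun x y => y ∈ A ∧ s y < s x) i w <
    ⌈((othersCount (fun _ y => y ∈ A) i w : ℝ) + 1) * (1 - α)⌉₊}

variable (A : Set E) (s : E → ℝ) (α : ℝ)

theorem preimage_comp_perm_localCoverageEvent (σ : Equiv.Perm (Fin m)) (i : Fin m) :
    (· ∘ σ) ⁻¹' localCoverageEvent A s α i = localCoverageEvent A s α (σ i) := by
  ext w
  simp [localCoverageEvent, othersCount_comp_perm]

theorem measurableSet_localCoverageEvent [MeasurableSpace E] {A : Set E} (hA : MeasurableSet A)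
    {s : E → ℝ} (hs : Measurable s) (α : ℝ) (i : Fin m) :
    MeasurableSet (localCoverageEvent A s α i) := by
  have hcounts := (measurable_othersCount (p := fun x y => y ∈ A ∧ s y < s x)
    ((hA.preimage measurable_snd).inter (measurableSet_lt (hs.comp measurable_snd)
      (hs.comp measurable_fst))) i).prodMk
    (measurable_othersCount (p := fun _ y => y ∈ A) (hA.preimage measurable_snd) i)
  exact (hA.preimage (measurable_pi_apply i)).inter
    (hcounts (Set.to_countable {c : ℕ × ℕ | c.1 < ⌈((c.2 : ℝ) + 1) * (1 - α)⌉₊}).measurableSet)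

theorem one_sub_mul_card_le_card_localCoverageEvent {α : ℝ} (hα : 0 ≤ α) (w : Fin m → E) :
    (1 - α) * #{i | w i ∈ A} ≤ #{i | w ∈ localCoverageEvent A s α i} := by
  set S : Finset (Fin m) := {i | w i ∈ A}
  set k := ⌈(#S : ℝ) * (1 - α)⌉₊
  have hrank : ∀ i, othersCount (fun x y => y ∈ A ∧ s y < s x) i w =
      #{r ∈ S | s (w r) < s (w i)} := fun i => by
    unfold othersCount
    congr 1
    ext r
    simp only [S, Finset.mem_filter, Finset.mem_univ, true_and]
    exact ⟨fun h => h.2, fun h => ⟨fun hri => (hri ▸ h.2).false, h⟩⟩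
  have hcount : ∀ i ∈ S, (othersCount (fun _ y => y ∈ A) i w : ℝ) + 1 = #S := fun i hi => by
    have hS : ({r | r ≠ i ∧ w r ∈ A} : Finset (Fin m)) = S.erase i := by
      ext r
      simp [S]
    rw [othersCount, hS, Finset.card_erase_of_mem hi, Nat.cast_sub (Finset.card_pos.mpr ⟨i, hi⟩)]
    ring
  have hevent : ({i | w ∈ localCoverageEvent A s α i} : Finset (Fin m)) =
      {i ∈ S | #{r ∈ S | s (w r) < s (w i)} < k} := by
    ext i
    have hiS : i ∈ S ↔ w i ∈ A := by simp [S]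
    simp only [localCoverageEvent, Finset.mem_filter, Finset.mem_univ, true_and,
      Set.mem_ofPred_eq, hrank, ← hiS]
    constructor <;> rintro ⟨hi, hlt⟩ <;> exact ⟨hi, by simpa only [hcount i hi] using hlt⟩
  calc (1 - α) * (#S : ℝ) ≤ ((min k #S : ℕ) : ℝ) := by
        rw [Nat.cast_min]
        refine le_min ((mul_comm _ _).trans_le (Nat.le_ceil _)) ?_
        nlinarith [(#S).cast_nonneg (α := ℝ)]
    _ ≤ #{i | w ∈ localCoverageEvent A s α i} := by
        rw [hevent]
        exact_mod_cast Finset.min_le_card_filter_card_filter_lt S (s ∘ w) k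

end LocalCoverageEvent

theorem ofReal_one_sub_mul_measure_le_localCoverageEvent {E : Type*} [MeasurableSpace E] {m : ℕ}
    {ν : Measure (Fin m → E)} (hν : ∀ σ : Equiv.Perm (Fin m), ν.map (· ∘ σ) = ν)
    {A : Set E} (hA : MeasurableSet A) {s : E → ℝ} (hs : Measurable s) {α : ℝ} (hα : 0 ≤ α)
    (i : Fin m) :
    ENNReal.ofReal (1 - α) * ν {w | w i ∈ A} ≤ ν (localCoverageEvent A s α i) := by
  refine mul_measure_le_of_forall_mul_card_le hν (B := fun i => {w | w i ∈ A})
    (fun _ _ => rfl) (preimage_comp_perm_localCoverageEvent A s α)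
    (fun i => measurable_pi_apply i hA) (measurableSet_localCoverageEvent hA hs α)
    (fun w => ?_) i
  rw [← ENNReal.ofReal_natCast, ← ENNReal.ofReal_natCast,
    ← ENNReal.ofReal_mul' (Nat.cast_nonneg _)]
  exact ENNReal.ofReal_le_ofReal (one_sub_mul_card_le_card_localCoverageEvent A s hα w)

section Locart

variable {Ω 𝒳 : Type*} {n : ℕ} (X : Fin (n + 1) → Ω → 𝒳) (Y : Fin (n + 1) → Ω → Fin 2)
  (phat : 𝒳 → ℝ) (A : Set 𝒳) (ω : Ω)

theorem predProb_eq_one_sub_confScore (ℓ : Fin 2) (x : 𝒳) :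
    predProb phat ℓ x = 1 - confScore phat x ℓ := by
  unfold predProb confScore
  split_ifs <;> ring

theorem measurable_uncurry_confScore [MeasurableSpace 𝒳] (hphat : Measurable phat) :
    Measurable (Function.uncurry (confScore phat)) :=
  Measurable.ite (measurable_snd (measurableSet_singleton 1))
    (measurable_const.sub (hphat.comp measurable_fst)) (hphat.comp measurable_fst)

theorem card_calibIndices :
    (calibIndices X A ω).card =
      othersCount (fun _ y => y.1 ∈ A) (Fin.last n) (fun i => (X i ω, Y i ω)) :=
  Fin.card_filter_univ_castSucc fun r => X r ω ∈ A

theorem countP_calibScores :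
    ((calibIndices X A ω).val.map fun i =>
        confScore phat (X i.castSucc ω) (Y i.castSucc ω)).countP
      (· < confScore phat (X (Fin.last n) ω) (Y (Fin.last n) ω)) =
      othersCount (fun x y => y.1 ∈ A ∧
        Function.uncurry (confScore phat) y < Function.uncurry (confScore phat) x)
        (Fin.last n) (fun i => (X i ω, Y i ω)) := by
  rw [Multiset.countP_map, ← Finset.filter_val, ← Finset.card_def, calibIndices,
    Finset.filter_filter, othersCount]
  exact (Fin.card_filter_univ_castSucc fun r => X r ω ∈ A ∧
    confScore phat (X r ω) (Y r ω) < confScore phat (X (Fin.last n) ω) (Y (Fin.last n) ω)).trans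
      (by congr!)

theorem preimage_localCoverageEvent_last {α : ℝ} (hα : α < 1) :
    (fun ω i => (X i ω, Y i ω)) ⁻¹'
        localCoverageEvent (Prod.fst ⁻¹' A) (Function.uncurry (confScore phat)) α (Fin.last n) =
      {ω | X (Fin.last n) ω ∈ A} ∩
        {ω | ((predProb phat (Y (Fin.last n) ω) (X (Fin.last n) ω) : ℝ) : EReal) ≥
          1 - locartQuantile X Y phat A α ω} := by
  ext ω
  refine and_congr_right fun _ => ?_
  have hk : 1 ≤ ⌈(((calibIndices X A ω).card : ℝ) + 1) * (1 - α)⌉₊ :=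
    Nat.one_le_iff_ne_zero.mpr (Nat.ceil_pos.mpr (by have := sub_pos.mpr hα; positivity)).ne'
  rw [Set.mem_ofPred_eq, predProb_eq_one_sub_confScore, locartQuantile, ge_iff_le,
    ← EReal.coe_one, EReal.sub_le_coe_sub_iff, coe_le_kthSmallestM_iff _ hk, countP_calibScores,
    card_calibIndices X Y]
  rfl

end Locart

theorem locart_local_coverage_general
    {Ω 𝒳 : Type*} [MeasurableSpace Ω] [MeasurableSpace 𝒳]
    (μ : Measure Ω) [IsProbabilityMeasure μ]
    (n : ℕ) (X : Fin (n + 1) → Ω → 𝒳) (Y : Fin (n + 1) → Ω → Fin 2)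
    (hX : ∀ i, Measurable (X i)) (hY : ∀ i, Measurable (Y i))
    (hexch : Exchangeable μ (fun i ω => (X i ω, Y i ω)))
    (K : ℕ) (P : Fin K → Set 𝒳)
    (hPmeas : ∀ j, MeasurableSet (P j))
    (phat : 𝒳 → ℝ) (hphatMeas : Measurable phat)
    (α : ℝ) (hα : α ∈ Set.Ioo (0 : ℝ) 1)
    (j : Fin K)
    (hpos : 0 < μ {ω | X (Fin.last n) ω ∈ P j}) :
    μ[|{ω | X (Fin.last n) ω ∈ P j}]
      {ω | ((predProb phat (Y (Fin.last n) ω) (X (Fin.last n) ω) : ℝ) : EReal) ≥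
          1 - locartQuantile X Y phat (P j) α ω} ≥
      ENNReal.ofReal (1 - α) := by
  have hZ : Measurable fun ω i => (X i ω, Y i ω) :=
    measurable_pi_lambda _ fun i => (hX i).prodMk (hY i)
  have hA : MeasurableSet (Prod.fst ⁻¹' P j : Set (𝒳 × Fin 2)) := measurable_fst (hPmeas j)
  have hscore := measurable_uncurry_confScore phat hphatMeas
  have hkey := ofReal_one_sub_mul_measure_le_localCoverageEvent
    (hexch.map_comp_perm fun i => (hX i).prodMk (hY i)) hA hscore hα.1.le (Fin.last n)
  rw [Measure.map_apply hZ (s := {w | w (Fin.last n) ∈ Prod.fst ⁻¹' P j})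
      (measurable_pi_apply _ hA),
    Measure.map_apply hZ (measurableSet_localCoverageEvent hA hscore _ _),
    preimage_localCoverageEvent_last X Y phat (P j) hα.2] at hkey
  rw [ge_iff_le, ← ENNReal.mul_le_mul_iff_left hpos.ne' (measure_ne_top _ _),
    cond_mul_eq_inter (s := {ω | X (Fin.last n) ω ∈ P j}) (hX _ (hPmeas j))]
  exact hkey

/-- **Local (partition-conditional) coverage of Locart**
(Theorem 1 of the paper, quoting Theorem 2 of Cabezas et al. 2024).
Given an exchangeable sequence `(X_i, Y_i)`, `i = 1, …, n+1`, with binary labels, a finite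
measurable partition `𝒳 = ⋃_j P j` of the feature space, a fixed measurable classifier
`phat : 𝒳 → [0,1]`, and a miscoverage level `α ∈ (0,1)`, the prediction set
`C_locart(x) = {ℓ ∈ {0,1} : p̂(ℓ|x) ≥ 1 - q_j}` (for `x ∈ P j`, with `q_j` the locally
calibrated quantile) satisfies, for every `j` with `P(X_{n+1} ∈ P j) > 0`,
`P(Y_{n+1} ∈ C_locart(X_{n+1}) | X_{n+1} ∈ P j) ≥ 1 - α`. -/
theorem locart_local_coverage
    {Ω 𝒳 : Type*} [MeasurableSpace Ω] [MeasurableSpace 𝒳]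
    (μ : Measure Ω) [IsProbabilityMeasure μ]
    (n : ℕ) (X : Fin (n + 1) → Ω → 𝒳) (Y : Fin (n + 1) → Ω → Fin 2)
    (hX : ∀ i, Measurable (X i)) (hY : ∀ i, Measurable (Y i))
    (hexch : Exchangeable μ (fun i ω => (X i ω, Y i ω)))
    (K : ℕ) (P : Fin K → Set 𝒳)
    (hPmeas : ∀ j, MeasurableSet (P j))
    (hPcover : (⋃ j, P j) = Set.univ)
    (hPdisj : Pairwise (Function.onFun Disjoint P))
    (phat : 𝒳 → ℝ) (hphatMeas : Measurable phat)
    (hphat0 : ∀ x, 0 ≤ phat x) (hphat1 : ∀ x, phat x ≤ 1)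
    (α : ℝ) (hα : α ∈ Set.Ioo (0 : ℝ) 1)
    (j : Fin K)
    (hpos : 0 < μ {ω | X (Fin.last n) ω ∈ P j}) :
    μ[|{ω | X (Fin.last n) ω ∈ P j}]
      {ω | ((predProb phat (Y (Fin.last n) ω) (X (Fin.last n) ω) : ℝ) : EReal) ≥
          1 - locartQuantile X Y phat (P j) α ω} ≥
      ENNReal.ofReal (1 - α) :=
  locart_local_coverage_general μ n X Y hX hY hexch K P hPmeas phat hphatMeas α hα j hpos
end

section
/- Let r_1, ..., r_{n+1} be exchangeable real-valued random variables and let α ∈ (0,1). Define q̂ to be the ⌈(n+1)(1−α)⌉-th smallest value among r_1, ..., r_n if ⌈(n+1)(1−α)⌉ ≤ n, and q̂ = +∞ otherwise. Then P( r_{n+1} ≤ q̂ ) ≥ 1 − α. -/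
open MeasureTheory ProbabilityTheory
open scoped ENNReal

/-- The `k`-th smallest value (1-indexed, i.e. the `k`-th order statistic) of the values
`r 0, …, r (n-1)`, as an extended real number, with the convention that it equals `+∞`
whenever `k` exceeds `n` (note `k ≥ 1` always holds in applications, so the condition
`k - 1 < n` coincides with `k ≤ n`). -/
noncomputable def kthSmallest {n : ℕ} (r : Fin n → ℝ) (k : ℕ) : EReal :=
  if h : k - 1 < n then ((r (Tuple.sort r ⟨k - 1, h⟩) : ℝ) : EReal) else ⊤

/-!
Call an index `j` good if fewer than `k = ⌈(n+1)(1-α)⌉` of the scores lie strictly below `r j`.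
Listing the scores in increasing order, the first `min (n+1) k` entries are good, so pointwise
at least `min (n+1) k` indices are good; by exchangeability every index is good with the same
probability, hence `r (last n)` is good with probability at least `min (n+1) k / (n+1) ≥ 1 - α`.
If it is good, fewer than `k` calibration scores lie below it, so it is at most `q̂`.
-/

open Finset

section countLt

variable {ι α : Type*} [Fintype ι] [LinearOrder α]

def countLt (x : ι → α) (c : α) : ℕ := #{i | x i < c}

lemma countLt_comp_le_of_injective {κ : Type*} [Fintype κ] (x : ι → α) {f : κ → ι}
    (hf : f.Injective) (c : α) : countLt (x ∘ f) c ≤ countLt x c :=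
  card_le_card_of_injOn f (fun i hi => by simpa using hi) hf.injOn

lemma countLt_comp_perm (x : ι → α) (σ : Equiv.Perm ι) (c : α) :
    countLt (x ∘ σ) c = countLt x c := by
  simp only [countLt, card_filter]
  exact Equiv.sum_comp σ fun i => if x i < c then 1 else 0

lemma measurable_countLt (j : ι) : Measurable fun x : ι → ℝ => countLt x (x j) := by
  simp_rw [countLt, card_filter]
  exact Finset.measurable_sum _ fun i _ =>
    Measurable.ite (measurableSet_lt (measurable_pi_apply i) (measurable_pi_apply j))
      measurable_const measurable_const

lemma min_le_card_countLt_lt {n : ℕ} (x : Fin n → α) (k : ℕ) :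
    min n k ≤ #{j | countLt x (x j) < k} := by
  have hsorted (m : Fin n) : countLt x (x (Tuple.sort x m)) ≤ m :=
    calc countLt x (x (Tuple.sort x m)) ≤ #(Iio m) :=
          card_le_card_of_injOn (Tuple.sort x).symm
            (fun i hi => mem_Iio.mpr ((Tuple.monotone_sort x).reflect_lt (by simpa using hi)))
            (Tuple.sort x).symm.injective.injOn
      _ = m := Fin.card_Iio m
  rw [← Fin.card_filter_val_lt]
  exact card_le_card_of_injOn (Tuple.sort x)
    (fun m hm => by simpa using (hsorted m).trans_lt (by simpa using hm))
    (Tuple.sort x).injective.injOn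

end countLt

lemma le_kthSmallest_of_countLt_lt {n : ℕ} (y : Fin n → ℝ) {c : ℝ} {k : ℕ}
    (hc : countLt y c < k) : (c : EReal) ≤ kthSmallest y k := by
  unfold kthSmallest
  split_ifs with hk
  · rw [EReal.coe_le_coe_iff]
    by_contra! hlt
    have hcard : #(Iic (⟨k - 1, hk⟩ : Fin n)) ≤ countLt y c :=
      card_le_card_of_injOn (Tuple.sort y)
        (fun m hm => by simpa using (Tuple.monotone_sort y (mem_Iic.mp hm)).trans_lt hlt)
        (Tuple.sort y).injective.injOn
    rw [Fin.card_Iic, Fin.val_mk] at hcard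
    omega
  · exact le_top

lemma Exchangeable.measure_preimage_perm {Ω E : Type*} [MeasurableSpace Ω] [MeasurableSpace E]
    {m : ℕ} {μ : Measure Ω} {Z : Fin m → Ω → E} (hexch : Exchangeable μ Z)
    (hZ : ∀ i, Measurable (Z i)) (σ : Equiv.Perm (Fin m)) {S : Set (Fin m → E)}
    (hS : MeasurableSet S) :
    μ {ω | (fun i => Z (σ i) ω) ∈ S} = μ {ω | (fun i => Z i ω) ∈ S} := by
  have h := congrArg (· S) (hexch σ)
  rwa [Measure.map_apply (measurable_pi_lambda _ fun i => hZ (σ i)) hS,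
    Measure.map_apply (measurable_pi_lambda _ hZ) hS] at h

lemma Exchangeable.measure_countLt_lt_eq {Ω : Type*} [MeasurableSpace Ω] {m : ℕ}
    {μ : Measure Ω} {Z : Fin m → Ω → ℝ} (hexch : Exchangeable μ Z)
    (hZ : ∀ i, Measurable (Z i)) (k : ℕ) (j j' : Fin m) :
    μ {ω | countLt (fun i => Z i ω) (Z j ω) < k} =
      μ {ω | countLt (fun i => Z i ω) (Z j' ω) < k} := by
  have hswap (ω : Ω) : countLt (fun i => Z (Equiv.swap j j' i) ω) (Z (Equiv.swap j j' j') ω) =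
      countLt (fun i => Z i ω) (Z j ω) := by
    rw [Equiv.swap_apply_right]
    exact countLt_comp_perm (fun i => Z i ω) _ _
  simpa only [Set.mem_preimage, Set.mem_Iio, hswap] using
    hexch.measure_preimage_perm hZ (Equiv.swap j j')
      (measurable_countLt j' (measurableSet_Iio (a := k)))

lemma le_sum_measure_of_le_card_mem {Ω ι : Type*} [MeasurableSpace Ω] [Fintype ι]
    {μ : Measure Ω} {E : ι → Set Ω} [∀ j, DecidablePred (· ∈ E j)]
    (hE : ∀ j, MeasurableSet (E j)) {k : ℕ} (hk : ∀ ω, k ≤ #{j | ω ∈ E j}) :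
    k * μ Set.univ ≤ ∑ j, μ (E j) :=
  calc k * μ Set.univ = ∫⁻ _, (k : ℝ≥0∞) ∂μ := (lintegral_const _).symm
    _ ≤ ∫⁻ ω, ∑ j, (E j).indicator 1 ω ∂μ := lintegral_mono fun ω => by
        simpa [Set.indicator_apply] using hk ω
    _ = ∑ j, μ (E j) := by
        rw [lintegral_finsetSum _ fun j _ => measurable_one.indicator (hE j)]
        simp only [lintegral_indicator_one (hE _)]

lemma ofReal_one_sub_mul_le_min_ceil {α : ℝ} (hα : 0 ≤ α) (m : ℕ) :
    ENNReal.ofReal (1 - α) * m ≤ (min m ⌈m * (1 - α)⌉₊ : ℕ) := by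
  rw [Nat.mono_cast.map_min, le_min_iff, ← ENNReal.ofReal_natCast, ← ENNReal.ofReal_natCast,
    ← ENNReal.ofReal_mul' m.cast_nonneg, mul_comm]
  constructor
  · exact ENNReal.ofReal_le_ofReal (by nlinarith [(m.cast_nonneg : (0 : ℝ) ≤ m)])
  · exact ENNReal.ofReal_le_ofReal (Nat.le_ceil _)

/-- **Marginal coverage of split conformal prediction.**
If `r 1, …, r (n+1)` are exchangeable real random variables, `α ∈ (0,1)`, and `q̂` is the
`⌈(n+1)(1-α)⌉`-th smallest of the first `n` of them (`+∞` if `⌈(n+1)(1-α)⌉ > n`), then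
`P(r_{n+1} ≤ q̂) ≥ 1 - α`. -/
theorem split_conformal_marginal_coverage
    {Ω : Type*} [MeasurableSpace Ω] (μ : Measure Ω) [IsProbabilityMeasure μ]
    (n : ℕ) (r : Fin (n + 1) → Ω → ℝ)
    (hmeas : ∀ i, Measurable (r i))
    (hexch : Exchangeable μ r)
    (α : ℝ) (hα : α ∈ Set.Ioo (0 : ℝ) 1) :
    μ {ω | ((r (Fin.last n) ω : ℝ) : EReal) ≤
        kthSmallest (fun i : Fin n => r i.castSucc ω) ⌈((n : ℝ) + 1) * (1 - α)⌉₊} ≥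
      ENNReal.ofReal (1 - α) := by
  set k := ⌈((n : ℝ) + 1) * (1 - α)⌉₊
  set E : Fin (n + 1) → Set Ω := fun j => {ω | countLt (fun i => r i ω) (r j ω) < k}
  have hE (j : Fin (n + 1)) : MeasurableSet (E j) :=
    (measurable_countLt j).comp (measurable_pi_lambda _ hmeas) measurableSet_Iio
  have hcount : ((min (n + 1) k : ℕ) : ℝ≥0∞) ≤ (n + 1 : ℕ) * μ (E (Fin.last n)) :=
    calc ((min (n + 1) k : ℕ) : ℝ≥0∞) ≤ ∑ j, μ (E j) := by
          simpa using le_sum_measure_of_le_card_mem (μ := μ) hE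
            fun ω => min_le_card_countLt_lt (fun i => r i ω) k
      _ = ∑ _j, μ (E (Fin.last n)) :=
          Finset.sum_congr rfl fun j _ => hexch.measure_countLt_lt_eq hmeas k j _
      _ = (n + 1 : ℕ) * μ (E (Fin.last n)) := by simp
  have hlast : E (Fin.last n) ⊆ {ω | ((r (Fin.last n) ω : ℝ) : EReal) ≤
      kthSmallest (fun i : Fin n => r i.castSucc ω) k} := fun ω hω =>
    le_kthSmallest_of_countLt_lt _
      ((countLt_comp_le_of_injective _ (Fin.castSucc_injective n) _).trans_lt hω)
  calc ENNReal.ofReal (1 - α) ≤ μ (E (Fin.last n)) := by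
        rw [← ENNReal.mul_le_mul_iff_left (c := (n + 1 : ℕ)) (by simp) (by simp),
          mul_comm (μ _)]
        refine le_trans ?_ hcount
        simpa using ofReal_one_sub_mul_le_min_ceil hα.1.le (n + 1)
    _ ≤ _ := measure_mono hlast
end

section
/- Let (X_i, R_i), i = 1, ..., n+1, be an exchangeable sequence of random pairs taking values in 𝒳 × ℝ, with the R_i almost surely pairwise distinct. Let A ⊆ 𝒳 be measurable, and let m ≥ 1 and k ∈ {1, ..., m}. Condition on the event E that X_{n+1} ∈ A and that exactly m of the indices i ∈ {1, ..., n+1} satisfy X_i ∈ A; assume P(E) > 0. Let R_{(k)} denote the k-th smallest value among {R_i : i ∈ {1,...,n+1}, X_i ∈ A}. Then P( R_{n+1} ≤ R_{(k)} | E ) = k/m. -/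
open MeasureTheory ProbabilityTheory
open scoped ENNReal Classical

/-! For `r ∈ [1, m]` and each index `j`, consider the event that `X_j ∈ A`, that exactly `m`
points fall in `A`, and that `R_j` has rank `r` among the scores of those points. Swapping `j`
and `n + 1` shows by exchangeability that these `n + 1` events are equally likely, and when the
scores are distinct exactly one of them occurs on `{exactly m points in A}`. Hence each has
probability `P(exactly m points in A) / (n + 1)`, independently of `r`: conditionally on `E`,
the rank of `R_{n+1}` is uniform on `[1, m]`, and `R_{n+1} ≤ R_(k)` iff that rank is at most `k`.
-/

open Finset

section Rank

variable {ι α : Type*} [LinearOrder α]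

noncomputable def rankIn (s : Finset ι) (f : ι → α) (j : ι) : ℕ := #{i ∈ s | f i ≤ f j}

variable {s : Finset ι} {f : ι → α} {i j : ι}

lemma rankIn_mem_Icc (hj : j ∈ s) : rankIn s f j ∈ Icc 1 #s :=
  mem_Icc.2 ⟨card_pos.2 ⟨j, mem_filter.2 ⟨hj, le_rfl⟩⟩, card_filter_le _ _⟩

lemma rankIn_lt_rankIn (hj : j ∈ s) (h : f i < f j) : rankIn s f i < rankIn s f j := by
  refine card_lt_card ((ssubset_iff_of_subset fun a ha => ?_).2 ⟨j, ?_, ?_⟩)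
  · simp only [mem_filter] at ha ⊢
    exact ⟨ha.1, ha.2.trans h.le⟩
  · exact mem_filter.2 ⟨hj, le_rfl⟩
  · simp [h]

lemma injOn_rankIn (hf : Set.InjOn f s) : Set.InjOn (rankIn s f) s := by
  intro i hi j hj hij
  rcases lt_trichotomy (f i) (f j) with h | h | h
  · exact absurd hij (rankIn_lt_rankIn hj h).ne
  · exact hf hi hj h
  · exact absurd hij (rankIn_lt_rankIn hi h).ne'

lemma card_filter_rankIn_eq_one [DecidableEq ι] (hf : Set.InjOn f s) {r : ℕ} (hr : r ∈ Icc 1 #s) :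
    #{j ∈ s | rankIn s f j = r} = 1 := by
  have himage : s.image (rankIn s f) = Icc 1 #s :=
    eq_of_subset_of_card_le (image_subset_iff.2 fun j hj => rankIn_mem_Icc hj)
      (by rw [Nat.card_Icc, card_image_of_injOn (injOn_rankIn hf)]; omega)
  obtain ⟨j, hj, rfl⟩ := mem_image.1 (himage ▸ hr)
  refine card_eq_one.2 ⟨j, eq_singleton_iff_unique_mem.2 ⟨mem_filter.2 ⟨hj, rfl⟩, ?_⟩⟩
  intro i hi
  exact injOn_rankIn hf (mem_filter.1 hi).1 hj (mem_filter.1 hi).2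

end Rank

lemma card_filter_le_get_of_sortedLT {l : List ℝ} (hl : l.SortedLT) (i : Fin l.length) :
    Multiset.card ((l : Multiset ℝ).filter (· ≤ l.get i)) = i + 1 := by
  have hl' : (l : Multiset ℝ) = univ.val.map l.get := by rw [Fin.univ_val_map, List.ofFn_get]
  rw [hl', Multiset.filter_map, Multiset.card_map, ← filter_val, card_val]
  simp only [Function.comp_def, hl.strictMono_get.le_iff_le]
  rw [filter_ge_eq_Iic, Fin.card_Iic]

lemma coe_le_kthSmallestM_iff_s4 {t : Multiset ℝ} (ht : t.Nodup) {x : ℝ} (hx : x ∈ t) {k : ℕ}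
    (hk1 : 1 ≤ k) (hkt : k ≤ Multiset.card t) :
    (x : EReal) ≤ kthSmallestM t k ↔ Multiset.card (t.filter (· ≤ x)) ≤ k := by
  set l := t.sort (· ≤ ·)
  have hl : (l : Multiset ℝ) = t := t.sort_eq _
  have hlt : l.SortedLT :=
    (List.sortedLE_iff_pairwise.2 (t.pairwise_sort (· ≤ ·))).sortedLT_of_nodup
      (by rwa [← Multiset.coe_nodup, hl])
  obtain ⟨i, rfl⟩ := List.mem_iff_get.1 (by rwa [← Multiset.mem_coe, hl] : x ∈ l)
  have hk : k - 1 < Multiset.card t := by omega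
  have hcard := card_filter_le_get_of_sortedLT hlt i
  rw [hl] at hcard
  rw [kthSmallestM, dif_pos hk, EReal.coe_le_coe_iff, hcard]
  change l.get i ≤ l.get ⟨k - 1, _⟩ ↔ _
  rw [hlt.strictMono_get.le_iff_le]
  change (i : ℕ) ≤ k - 1 ↔ _
  omega

lemma coe_le_kthSmallestM_map_iff {ι : Type*} {s : Finset ι} {f : ι → ℝ} (hf : Set.InjOn f s)
    {j : ι} (hj : j ∈ s) {k : ℕ} (hk1 : 1 ≤ k) (hks : k ≤ #s) :
    (f j : EReal) ≤ kthSmallestM (s.val.map f) k ↔ rankIn s f j ≤ k := by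
  rw [coe_le_kthSmallestM_iff_s4 (s.nodup.map_on fun x hx y hy h => hf hx hy h)
    (Multiset.mem_map_of_mem f hj) hk1 (by simpa), Multiset.filter_map, Multiset.card_map]
  rfl

section Probability

variable {Ω α : Type*} [MeasurableSpace Ω] [MeasurableSpace α] {μ : Measure Ω}

lemma measurable_card_filter {ι : Type*} [Fintype ι] {p : ι → Ω → Prop}
    [∀ i, DecidablePred (p i)] (hp : ∀ i, MeasurableSet {ω | p i ω}) :
    Measurable fun ω => #{i | p i ω} := by
  simp only [card_filter]
  exact Finset.measurable_sum _ fun i _ => Measurable.ite (hp i) measurable_const measurable_const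

lemma ae_injective_of_measure_eq_zero {ι β : Type*} [Countable ι] {Y : ι → Ω → β}
    (h : ∀ i j, i ≠ j → μ {ω | Y i ω = Y j ω} = 0) :
    ∀ᵐ ω ∂μ, Function.Injective fun i => Y i ω := by
  simp only [Function.Injective, ae_all_iff]
  intro i j
  by_cases hij : i = j
  · exact ae_of_all _ fun _ _ => hij
  · exact (measure_eq_zero_iff_ae_notMem.1 (h i j hij)).mono fun ω hω h => absurd h hω

lemma sum_measure_eq_of_ae_card_eq {ι : Type*} [Fintype ι] {S : ι → Set Ω}
    (hS : ∀ i, MeasurableSet (S i)) {H : Set Ω} (hH : MeasurableSet H)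
    (h : ∀ᵐ ω ∂μ, #{i | ω ∈ S i} = H.indicator 1 ω) : ∑ i, μ (S i) = μ H := by
  calc ∑ i, μ (S i) = ∑ i, ∫⁻ ω, (S i).indicator 1 ω ∂μ := by
        simp only [lintegral_indicator_one (hS _)]
    _ = ∫⁻ ω, ∑ i, (S i).indicator 1 ω ∂μ :=
        (lintegral_finsetSum _ fun i _ => measurable_one.indicator (hS i)).symm
    _ = ∫⁻ ω, H.indicator 1 ω ∂μ := by
        refine lintegral_congr_ae (h.mono fun ω hω => ?_)
        simp only [Set.indicator_apply, Pi.one_apply, sum_boole] at hω ⊢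
        rw [hω]
        split_ifs <;> simp
    _ = μ H := lintegral_indicator_one hH

lemma measure_le_eq_div_of_uniform_on_Icc {ν : Measure Ω} [IsProbabilityMeasure ν] {g : Ω → ℕ}
    (hg : Measurable g) {m : ℕ} (hsupp : ∀ᵐ ω ∂ν, g ω ∈ Icc 1 m)
    (hunif : ∀ r ∈ Icc 1 m, ∀ r' ∈ Icc 1 m, ν (g ⁻¹' {r}) = ν (g ⁻¹' {r'})) {k : ℕ}
    (hkm : k ≤ m) :
    ν {ω | g ω ≤ k} = k / m := by
  obtain ⟨ω₀, hω₀⟩ := hsupp.exists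
  have h1 : 1 ∈ Icc 1 m := mem_Icc.2 ⟨le_rfl, (mem_Icc.1 hω₀).1.trans (mem_Icc.1 hω₀).2⟩
  have hIcc : ∀ k ≤ m, ν {ω | g ω ≤ k} = k * ν (g ⁻¹' {1}) := by
    intro k hk
    have hle : {ω | g ω ≤ k} =ᵐ[ν] g ⁻¹' ↑(Icc 1 k) :=
      Filter.eventuallyEq_set.2 <| hsupp.mono fun ω hω => by simp [(mem_Icc.1 hω).1]
    rw [measure_congr hle,
      ← sum_measure_preimage_singleton _ fun r _ => hg (measurableSet_singleton r),
      Finset.sum_congr rfl fun r hr => hunif r ?_ 1 h1, sum_const, Nat.card_Icc, nsmul_eq_mul,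
      Nat.add_sub_cancel]
    exact mem_Icc.2 ⟨(mem_Icc.1 hr).1, (mem_Icc.1 hr).2.trans hk⟩
  have hm : (m : ℝ≥0∞) * ν (g ⁻¹' {1}) = 1 := by
    rw [← hIcc m le_rfl, ← measure_univ (μ := ν)]
    exact measure_congr <| Filter.eventuallyEq_set.2 <| hsupp.mono fun ω hω => by
      simp [(mem_Icc.1 hω).2]
  rw [hIcc k hkm, ENNReal.eq_inv_of_mul_eq_one_left ((mul_comm _ _).trans hm), div_eq_mul_inv]

variable {N : ℕ} {Z : Fin N → Ω → α}

lemma Exchangeable.measure_preimage_comp_perm (hZ : Exchangeable μ Z)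
    (hZm : ∀ i, Measurable (Z i)) (σ : Equiv.Perm (Fin N)) {B : Set (Fin N → α)}
    (hB : MeasurableSet B) :
    μ ((fun ω i => Z (σ i) ω) ⁻¹' B) = μ ((fun ω i => Z i ω) ⁻¹' B) := by
  rw [← Measure.map_apply (measurable_pi_lambda _ fun i => hZm (σ i)) hB, hZ σ,
    Measure.map_apply (measurable_pi_lambda _ hZm) hB]

lemma Exchangeable.card_mul_measure_preimage_eq (hZ : Exchangeable μ Z)
    (hZm : ∀ i, Measurable (Z i)) {G : Fin N → Set (Fin N → α)} (hG : ∀ j, MeasurableSet (G j))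
    (hGσ : ∀ (σ : Equiv.Perm (Fin N)) j, (fun z => z ∘ σ) ⁻¹' G j = G (σ j)) {H : Set (Fin N → α)}
    (hH : MeasurableSet H)
    (hcount : ∀ᵐ ω ∂μ, #{j | (fun i => Z i ω) ∈ G j} = H.indicator 1 fun i => Z i ω)
    (j : Fin N) :
    N * μ ((fun ω i => Z i ω) ⁻¹' G j) = μ ((fun ω i => Z i ω) ⁻¹' H) := by
  have hZ' : Measurable fun ω i => Z i ω := measurable_pi_lambda _ hZm
  have heq : ∀ j', μ ((fun ω i => Z i ω) ⁻¹' G j') = μ ((fun ω i => Z i ω) ⁻¹' G j) := by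
    intro j'
    have hσ := hGσ (Equiv.swap j j') j
    rw [Equiv.swap_apply_left] at hσ
    rw [← hσ, ← hZ.measure_preimage_comp_perm hZm (Equiv.swap j j') (hG j)]
    rfl
  rw [← sum_measure_eq_of_ae_card_eq (fun j => hZ' (hG j)) (hZ' hH) hcount,
    Finset.sum_congr rfl fun j' _ => heq j', sum_const, card_univ, Fintype.card_fin, nsmul_eq_mul]

end Probability

section LocalRank

variable {ι 𝒳 : Type*} [Fintype ι] (A : Set 𝒳)

noncomputable def localIndices (z : ι → 𝒳 × ℝ) : Finset ι := {i | (z i).1 ∈ A}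

noncomputable def localRank (z : ι → 𝒳 × ℝ) (j : ι) : ℕ :=
  rankIn (localIndices A z) (fun i => (z i).2) j

def localEvent (m : ℕ) (j : ι) : Set (ι → 𝒳 × ℝ) := {z | (z j).1 ∈ A ∧ #(localIndices A z) = m}

def localRankEvent (m : ℕ) (j : ι) (r : ℕ) : Set (ι → 𝒳 × ℝ) :=
  localEvent A m j ∩ {z | localRank A z j = r}

variable {A}

@[simp]
lemma mem_localIndices {z : ι → 𝒳 × ℝ} {i : ι} : i ∈ localIndices A z ↔ (z i).1 ∈ A := by
  simp [localIndices]

lemma card_localIndices_comp_perm (z : ι → 𝒳 × ℝ) (σ : Equiv.Perm ι) :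
    #(localIndices A (z ∘ σ)) = #(localIndices A z) :=
  card_equiv σ (by simp [localIndices])

lemma localRank_comp_perm (z : ι → 𝒳 × ℝ) (σ : Equiv.Perm ι) (j : ι) :
    localRank A (z ∘ σ) j = localRank A z (σ j) :=
  card_equiv σ (by simp [localIndices])

lemma preimage_comp_perm_localRankEvent (σ : Equiv.Perm ι) (m : ℕ) (j : ι) (r : ℕ) :
    (fun z => z ∘ σ) ⁻¹' localRankEvent A m j r = localRankEvent A m (σ j) r := by
  ext z
  simp [localRankEvent, localEvent, card_localIndices_comp_perm, localRank_comp_perm]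

lemma localRank_mem_Icc {z : ι → 𝒳 × ℝ} {m : ℕ} {j : ι} (hz : z ∈ localEvent A m j) :
    localRank A z j ∈ Icc 1 m :=
  hz.2 ▸ rankIn_mem_Icc (mem_localIndices.2 hz.1)

lemma card_localRankEvent {z : ι → 𝒳 × ℝ}
    (hz : Set.InjOn (fun i => (z i).2) (localIndices A z)) {m r : ℕ} (hr : r ∈ Icc 1 m) :
    #{j | z ∈ localRankEvent A m j r} = {z | #(localIndices A z) = m}.indicator 1 z := by
  by_cases hm : #(localIndices A z) = m
  · rw [Set.indicator_of_mem (s := {z | #(localIndices A z) = m}) hm, Pi.one_apply,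
      ← card_filter_rankIn_eq_one hz (hm ▸ hr)]
    congr 1
    ext j
    simp [localRankEvent, localEvent, localRank, hm]
  · simp [localRankEvent, localEvent, hm]

variable [MeasurableSpace 𝒳]

lemma measurable_card_localIndices (hA : MeasurableSet A) :
    Measurable fun z : ι → 𝒳 × ℝ => #(localIndices A z) :=
  measurable_card_filter fun i => (measurable_pi_apply i).fst hA

lemma measurable_localRank (hA : MeasurableSet A) (j : ι) :
    Measurable fun z : ι → 𝒳 × ℝ => localRank A z j := by
  have h : ∀ z : ι → 𝒳 × ℝ, localRank A z j = #{i | (z i).1 ∈ A ∧ (z i).2 ≤ (z j).2} :=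
    fun z => by rw [localRank, rankIn, localIndices, filter_filter]
  have hle : ∀ i, MeasurableSet {z : ι → 𝒳 × ℝ | (z i).2 ≤ (z j).2} :=
    fun i => measurableSet_le (measurable_pi_apply i).snd (measurable_pi_apply j).snd
  simp only [h]
  exact measurable_card_filter fun i => ((measurable_pi_apply i).fst hA).inter (hle i)

lemma measurableSet_localEvent (hA : MeasurableSet A) (m : ℕ) (j : ι) :
    MeasurableSet (localEvent A m j) :=
  ((measurable_pi_apply j).fst hA).inter
    (measurable_card_localIndices hA (measurableSet_singleton m))

lemma measurableSet_localRankEvent (hA : MeasurableSet A) (m : ℕ) (j : ι) (r : ℕ) :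
    MeasurableSet (localRankEvent A m j r) :=
  (measurableSet_localEvent hA m j).inter (measurable_localRank hA j (measurableSet_singleton r))

end LocalRank

lemma Exchangeable.measure_localRankEvent_eq {Ω 𝒳 : Type*} [MeasurableSpace Ω]
    [MeasurableSpace 𝒳] {μ : Measure Ω} {N : ℕ} {Z : Fin N → Ω → 𝒳 × ℝ} (hZ : Exchangeable μ Z)
    (hZm : ∀ i, Measurable (Z i)) {A : Set 𝒳} (hA : MeasurableSet A)
    (hinj : ∀ᵐ ω ∂μ, Function.Injective fun i => (Z i ω).2) {m r r' : ℕ} (hr : r ∈ Icc 1 m)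
    (hr' : r' ∈ Icc 1 m) (j : Fin N) :
    μ ((fun ω i => Z i ω) ⁻¹' localRankEvent A m j r) =
      μ ((fun ω i => Z i ω) ⁻¹' localRankEvent A m j r') := by
  have hcard (r : ℕ) (hr : r ∈ Icc 1 m) := hZ.card_mul_measure_preimage_eq hZm
    (measurableSet_localRankEvent hA m · r) (fun σ j => preimage_comp_perm_localRankEvent σ m j r)
    (measurable_card_localIndices hA (measurableSet_singleton m))
    (hinj.mono fun ω hω => card_localRankEvent hω.injOn hr) j
  have hN : (N : ℝ≥0∞) ≠ 0 := Nat.cast_ne_zero.2 j.pos.ne'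
  exact (ENNReal.mul_right_inj hN (ENNReal.natCast_ne_top N)).1
    ((hcard r hr).trans (hcard r' hr').symm)

theorem conditional_rank_uniformity_general
    {Ω 𝒳 : Type*} [MeasurableSpace Ω] [MeasurableSpace 𝒳]
    (μ : Measure Ω) [IsProbabilityMeasure μ]
    (n : ℕ) (X : Fin (n + 1) → Ω → 𝒳) (R : Fin (n + 1) → Ω → ℝ)
    (hX : ∀ i, Measurable (X i)) (hR : ∀ i, Measurable (R i))
    (hexch : Exchangeable μ (fun i ω => (X i ω, R i ω)))
    (hdistinct : ∀ i j : Fin (n + 1), i ≠ j → μ {ω | R i ω = R j ω} = 0)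
    (A : Set 𝒳) (hA : MeasurableSet A)
    (m k : ℕ) (hk1 : 1 ≤ k) (hkm : k ≤ m)
    (E : Set Ω)
    (hE : E = {ω | X (Fin.last n) ω ∈ A ∧
        (Finset.univ.filter fun i : Fin (n + 1) => X i ω ∈ A).card = m})
    (hEpos : 0 < μ E) :
    μ[|E]
      {ω | ((R (Fin.last n) ω : ℝ) : EReal) ≤
          kthSmallestM
            ((Finset.univ.filter fun i : Fin (n + 1) => X i ω ∈ A).val.map
              fun i => R i ω) k} =
      ENNReal.ofReal ((k : ℝ) / (m : ℝ)) := by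
  set Z : Ω → Fin (n + 1) → 𝒳 × ℝ := fun ω i => (X i ω, R i ω)
  have hZm : ∀ i, Measurable fun ω => (X i ω, R i ω) := fun i => (hX i).prodMk (hR i)
  have hZ : Measurable Z := measurable_pi_lambda _ hZm
  replace hE : E = Z ⁻¹' localEvent A m (Fin.last n) := hE
  have hEm : MeasurableSet E := hE ▸ hZ (measurableSet_localEvent hA m _)
  have hinj := ae_injective_of_measure_eq_zero hdistinct
  set g : Ω → ℕ := fun ω => localRank A (Z ω) (Fin.last n)
  have hg : Measurable g := (measurable_localRank hA _).comp hZ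
  have := cond_isProbabilityMeasure (μ := μ) hEpos.ne'
  have hae : ∀ᵐ ω ∂μ[|E], Z ω ∈ localEvent A m (Fin.last n) ∧ Function.Injective fun i => R i ω :=
    ((ae_cond_mem hEm).mono fun ω hω => by rwa [hE] at hω).and
      (cond_absolutelyContinuous.ae_le hinj)
  have hunif : ∀ r ∈ Icc 1 m, ∀ r' ∈ Icc 1 m, μ[g ⁻¹' {r} | E] = μ[g ⁻¹' {r'} | E] := by
    intro r hr r' hr'
    rw [cond_apply hEm, cond_apply hEm, hE]
    exact congrArg _ (hexch.measure_localRankEvent_eq hZm hA hinj hr hr' _)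
  have hT : {ω | ((R (Fin.last n) ω : ℝ) : EReal) ≤ kthSmallestM
      ((Finset.univ.filter fun i : Fin (n + 1) => X i ω ∈ A).val.map fun i => R i ω) k}
      =ᵐ[μ[|E]] {ω | g ω ≤ k} :=
    Filter.eventuallyEq_set.2 <| hae.mono fun ω hω =>
      coe_le_kthSmallestM_map_iff hω.2.injOn (mem_localIndices.2 hω.1.1) hk1 (hω.1.2 ▸ hkm)
  rw [measure_congr hT, measure_le_eq_div_of_uniform_on_Icc hg
      (hae.mono fun ω hω => localRank_mem_Icc hω.1) hunif hkm,
    ENNReal.ofReal_div_of_pos (by exact_mod_cast hk1.trans hkm), ENNReal.ofReal_natCast,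
    ENNReal.ofReal_natCast]

/-- **Conditional rank uniformity within a partition element.**
Let `(X_i, R_i)`, `i = 1, …, n+1`, be exchangeable with the `R_i` almost surely pairwise
distinct, let `A` be measurable, `1 ≤ k ≤ m`. Conditional on the event `E` that
`X_{n+1} ∈ A` and exactly `m` of the indices `i ∈ {1,…,n+1}` satisfy `X_i ∈ A`
(assumed to have positive probability), the probability that `R_{n+1}` does not exceed
the `k`-th smallest value among `{R_i : X_i ∈ A}` is exactly `k / m`. -/
theorem conditional_rank_uniformity
    {Ω 𝒳 : Type*} [MeasurableSpace Ω] [MeasurableSpace 𝒳]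
    (μ : Measure Ω) [IsProbabilityMeasure μ]
    (n : ℕ) (X : Fin (n + 1) → Ω → 𝒳) (R : Fin (n + 1) → Ω → ℝ)
    (hX : ∀ i, Measurable (X i)) (hR : ∀ i, Measurable (R i))
    (hexch : Exchangeable μ (fun i ω => (X i ω, R i ω)))
    (hdistinct : ∀ i j : Fin (n + 1), i ≠ j → μ {ω | R i ω = R j ω} = 0)
    (A : Set 𝒳) (hA : MeasurableSet A)
    (m k : ℕ) (hm : 1 ≤ m) (hk1 : 1 ≤ k) (hkm : k ≤ m)
    (E : Set Ω)
    (hE : E = {ω | X (Fin.last n) ω ∈ A ∧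
        (Finset.univ.filter fun i : Fin (n + 1) => X i ω ∈ A).card = m})
    (hEpos : 0 < μ E) :
    μ[|E]
      {ω | ((R (Fin.last n) ω : ℝ) : EReal) ≤
          kthSmallestM
            ((Finset.univ.filter fun i : Fin (n + 1) => X i ω ∈ A).val.map
              fun i => R i ω) k} =
      ENNReal.ofReal ((k : ℝ) / (m : ℝ)) :=
  conditional_rank_uniformity_general μ n X R hX hR hexch hdistinct A hA m k hk1 hkm E hE hEpos
end
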